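/- arXiv:2111.13306 — 2 statements merged into one kernel-verified Lean document; each statement's English description precedes it below -/
import Mathlib

section
/- Let (L₋₁ ⊕ L₀, {0, l₂, l₃}, {0, l₂', l₃'}) be a skeletal 2-term compatible L∞-algebra (i.e. one with l₁ = l₁' = 0). Set g = L₀ with brackets [x,y] := l₂(x,y) and [x,y]' := l₂'(x,y), and V = L₋₁ with ρ(x)h := l₂(x,h) and ρ'(x)h := l₂'(x,h). Then (g,[·,·],[·,·]') is a compatible Lie algebra, (V,ρ,ρ') is a representation of it, and the alternating trilinear maps l₃, l₃': g³ → V satisfy ∂l₃ = 0, ∂'l₃' = 0 and ∂l₃' + ∂'l₃ = 0, where ∂ and ∂' are the Chevalley–Eilenberg differentials of (g,[·,·],ρ) and (g,[·,·]',ρ') respectively; in particular the triple (l₃, l₃ + l₃', l₃') is a 3-cocycle of the compatible cochain complex. -/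
variable {K : Type*} [Field K] [CharZero K]
variable {A M : Type*} [AddCommGroup A] [Module K A] [AddCommGroup M] [Module K M]

/-- A 2-term L∞-algebra structure on `L₋₁ ⊕ L₀` with `L₋₁ = A`, `L₀ = M`:
`d = l₁ : A → M`, `b = l₂ : M × M → M` (skew-symmetric), `a = l₂ : M × A → A` (with the
convention `l₂(h,x) = −l₂(x,h) = −a x h`), and `t = l₃ : M³ → A` (alternating), subject to
the axioms (L1)–(L5). -/
structure IsL2 (d : A →ₗ[K] M) (b : M →ₗ[K] M →ₗ[K] M)
    (a : M →ₗ[K] A →ₗ[K] A) (t : M →ₗ[K] M →ₗ[K] M →ₗ[K] A) : Prop where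
  b_skew : ∀ x y : M, b x y = - b y x
  t_skew12 : ∀ x y z : M, t x y z = - t y x z
  t_skew23 : ∀ x y z : M, t x y z = - t x z y
  L1 : ∀ (x : M) (h : A), d (a x h) = b x (d h)
  L2 : ∀ h k : A, a (d h) k = - a (d k) h
  L3 : ∀ x y z : M, d (t x y z) = - b (b x y) z + b (b x z) y + b x (b y z)
  L4 : ∀ (h : A) (x y : M),
    t (d h) x y = - a (b x y) h - a y (a x h) + a x (a y h)
  L5 : ∀ w x y z : M,
    - a z (t w x y) - a x (t w y z) + a y (t w x z) + a w (t x y z)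
      = t (b w x) y z - t (b w y) x z + t (b w z) x y
        + t (b x y) w z - t (b x z) w y + t (b y z) w x

/-- The compatibility conditions (C1)–(C5) between two 2-term L∞-algebra structures
`(d,b,a,t)` and `(d',b',a',t')` on `L₋₁ ⊕ L₀` (with the convention
`l₂(h,x) = −a x h`, `l₂'(h,x) = −a' x h`). -/
structure IsCompat2 (d d' : A →ₗ[K] M) (b b' : M →ₗ[K] M →ₗ[K] M)
    (a a' : M →ₗ[K] A →ₗ[K] A) (t t' : M →ₗ[K] M →ₗ[K] M →ₗ[K] A) : Prop where
  C1 : ∀ (x : M) (h : A), d (a' x h) + d' (a x h) = b x (d' h) + b' x (d h)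
  C2 : ∀ h k : A, a (d' h) k + a' (d h) k = - a (d' k) h - a' (d k) h
  C3 : ∀ x y z : M, d (t' x y z) + d' (t x y z)
    = - b (b' x y) z - b' (b x y) z + b (b' x z) y + b' (b x z) y
      + b x (b' y z) + b' x (b y z)
  C4 : ∀ (h : A) (x y : M),
    t (d' h) x y + t' (d h) x y
      = - a (b' x y) h - a' (b x y) h - a y (a' x h) - a' y (a x h)
        + a x (a' y h) + a' x (a y h)
  C5 : ∀ w x y z : M,
    - a z (t' w x y) - a' z (t w x y) - a x (t' w y z) - a' x (t w y z)
      + a y (t' w x z) + a' y (t w x z) + a w (t' x y z) + a' w (t x y z)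
      = t (b' w x) y z + t' (b w x) y z - t (b' w y) x z - t' (b w y) x z
        + t (b' w z) x y + t' (b w z) x y + t (b' x y) w z + t' (b x y) w z
        - t (b' x z) w y - t' (b x z) w y + t (b' y z) w x + t' (b y z) w x

/-- A compatible Lie algebra structure: two skew-symmetric brackets, each satisfying the
Jacobi identity, satisfying the compatibility condition. -/
structure IsCompatLie {X : Type*} [AddCommGroup X] [Module K X]
    (B B' : X →ₗ[K] X →ₗ[K] X) : Prop where
  skew : ∀ x y : X, B x y = - B y x
  skew' : ∀ x y : X, B' x y = - B' y x
  jacobi : ∀ x y z : X, B (B x y) z + B (B y z) x + B (B z x) y = 0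
  jacobi' : ∀ x y z : X, B' (B' x y) z + B' (B' y z) x + B' (B' z x) y = 0
  compat : ∀ x y z : X, B (B' x y) z + B' (B x y) z
    = B (B' x z) y + B' (B x z) y + B x (B' y z) + B' x (B y z)

/-- The Chevalley–Eilenberg differential on `n`-cochains `(Fin n → X) → W`. -/
def ceDiff {X W : Type*} [AddCommGroup X] [Module K X] [AddCommGroup W] [Module K W]
    (br : X → X → X) (ρ : X → Module.End K W) :
    (n : ℕ) → ((Fin n → X) → W) → ((Fin (n + 1) → X) → W)
  | 0, f => fun x => ρ (x 0) (f Fin.elim0)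
  | n + 1, f => fun x =>
      (∑ i : Fin (n + 2), ((-1 : ℤ) ^ (i : ℕ)) • ρ (x i) (f (x ∘ i.succAbove))) +
      ∑ i : Fin (n + 2), ∑ j : Fin (n + 2),
        if h : (i : ℕ) < (j : ℕ) then
          ((-1 : ℤ) ^ ((i : ℕ) + (j : ℕ))) •
            f (Fin.cons (br (x i) (x j)) (fun k : Fin n =>
              x (j.succAbove ((Fin.castLT i
                (lt_of_lt_of_le h (Nat.lt_succ_iff.mp j.isLt))).succAbove k))))
        else 0

/-- The differential of the compatible cochain complex:
`∂_c(f₁,…,fₙ) = (∂f₁, ∂f₂ + ∂'f₁, …, ∂fᵢ + ∂'f_{i−1}, …, ∂'fₙ)`. -/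
def compDiff {X W : Type*} [AddCommGroup X] [Module K X] [AddCommGroup W] [Module K W]
    (br br' : X → X → X) (ρ ρ' : X → Module.End K W) (n : ℕ)
    (F : Fin n → ((Fin n → X) → W)) : Fin (n + 1) → ((Fin (n + 1) → X) → W) :=
  fun i =>
    (if h : (i : ℕ) < n then ceDiff br ρ n (F ⟨(i : ℕ), h⟩) else 0) +
    (if h : 0 < (i : ℕ) then
        ceDiff br' ρ' n (F ⟨(i : ℕ) - 1, by have := i.isLt; omega⟩) else 0)

/-!
With `l₁ = l₁' = 0` every term of the axioms containing `l₁` vanishes, and what remains is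
exactly the claimed structure: (L3) becomes the Jacobi identity, (L4) says that `ρ` is a
representation, and (L5), written out, is `∂l₃ = 0`; likewise (C3), (C4), (C5) give the
compatibility of the brackets, the mixed representation condition and `∂l₃' + ∂'l₃ = 0`.
The compatible coboundary of `(l₃, l₃ + l₃', l₃')` then vanishes because `∂` is additive
in the cochain.
-/

section CochainComplex

variable {𝕜 X W : Type*} [Field 𝕜] [AddCommGroup X] [Module 𝕜 X] [AddCommGroup W] [Module 𝕜 W]

theorem ceDiff_add (br : X → X → X) (ρ : X → Module.End 𝕜 W) (n : ℕ)
    (f g : (Fin n → X) → W) (x : Fin (n + 1) → X) :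
    ceDiff br ρ n (fun v => f v + g v) x = ceDiff br ρ n f x + ceDiff br ρ n g x := by
  cases n with
  | zero => exact map_add _ _ _
  | succ n =>
    simp only [ceDiff, map_add, smul_add, Finset.sum_add_distrib]
    rw [add_add_add_comm]
    congr 1
    simp only [← Finset.sum_add_distrib]
    refine Finset.sum_congr rfl fun i _ => Finset.sum_congr rfl fun j _ => ?_
    split_ifs <;> simp only [add_zero]

theorem ceDiff_three_apply (br : X → X → X) (ρ : X → Module.End 𝕜 W) (f : X → X → X → W)
    (x : Fin 4 → X) :
    ceDiff br ρ 3 (fun v => f (v 0) (v 1) (v 2)) x =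
      ρ (x 0) (f (x 1) (x 2) (x 3)) - ρ (x 1) (f (x 0) (x 2) (x 3))
      + ρ (x 2) (f (x 0) (x 1) (x 3)) - ρ (x 3) (f (x 0) (x 1) (x 2))
      - f (br (x 0) (x 1)) (x 2) (x 3) + f (br (x 0) (x 2)) (x 1) (x 3)
      - f (br (x 0) (x 3)) (x 1) (x 2) - f (br (x 1) (x 2)) (x 0) (x 3)
      + f (br (x 1) (x 3)) (x 0) (x 2) - f (br (x 2) (x 3)) (x 0) (x 1) := by
  have cons_two (a : X) (p : Fin 2 → X) : (Fin.cons a p : Fin 3 → X) 2 = p 1 := rfl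
  simp only [ceDiff]
  rw [Fin.sum_univ_four, Fin.sum_univ_four, Fin.sum_univ_four, Fin.sum_univ_four,
    Fin.sum_univ_four, Fin.sum_univ_four]
  simp [Fin.succAbove, Fin.lt_def, Fin.castLT, cons_two, sub_eq_add_neg, add_assoc]

theorem compDiff_eq_zero {br br' : X → X → X} {ρ ρ' : X → Module.End 𝕜 W}
    {f g : (Fin 3 → X) → W} (hf : ∀ x, ceDiff br ρ 3 f x = 0)
    (hg : ∀ x, ceDiff br' ρ' 3 g x = 0)
    (hfg : ∀ x, ceDiff br ρ 3 g x + ceDiff br' ρ' 3 f x = 0) (i : Fin 4) (x : Fin 4 → X) :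
    compDiff br br' ρ ρ' 3
      (fun j => if (j : ℕ) = 0 then f else if (j : ℕ) = 2 then g else fun v => f v + g v)
      i x = 0 := by
  fin_cases i <;> simp [compDiff, ceDiff_add, hf, hg, hfg]

end CochainComplex

section Skeletal

variable {𝕜 𝔤 V : Type*} [Field 𝕜] [AddCommGroup 𝔤] [Module 𝕜 𝔤] [AddCommGroup V] [Module 𝕜 V]
  {d d' : V →ₗ[𝕜] 𝔤} {b b' : 𝔤 →ₗ[𝕜] 𝔤 →ₗ[𝕜] 𝔤} {a a' : 𝔤 →ₗ[𝕜] V →ₗ[𝕜] V}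
  {t t' : 𝔤 →ₗ[𝕜] 𝔤 →ₗ[𝕜] 𝔤 →ₗ[𝕜] V}

theorem IsL2.jacobi (h : IsL2 0 b a t) (x y z : 𝔤) :
    b (b x y) z + b (b y z) x + b (b z x) y = 0 := by
  have hL3 := h.L3 x y z
  rw [LinearMap.zero_apply] at hL3
  rw [h.b_skew (b y z) x, h.b_skew z x, map_neg, LinearMap.neg_apply]
  linear_combination (norm := module) hL3

theorem IsL2.map_bracket (h : IsL2 0 b a t) (x y : 𝔤) :
    a (b x y) = a x ∘ₗ a y - a y ∘ₗ a x := by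
  ext v
  have hL4 := h.L4 v x y
  simp only [LinearMap.zero_apply, map_zero] at hL4
  simp only [LinearMap.sub_apply, LinearMap.comp_apply]
  linear_combination (norm := module) hL4

theorem IsL2.ceDiff_eq_zero (h : IsL2 d b a t) (x : Fin 4 → 𝔤) :
    ceDiff (fun u v => b u v) (fun u => a u) 3 (fun v => t (v 0) (v 1) (v 2)) x = 0 := by
  rw [ceDiff_three_apply _ _ (t · · ·)]
  linear_combination (norm := module) h.L5 (x 0) (x 1) (x 2) (x 3)

theorem IsCompat2.compat (h : IsCompat2 0 0 b b' a a' t t') (x y z : 𝔤) :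
    b (b' x y) z + b' (b x y) z
      = b (b' x z) y + b' (b x z) y + b x (b' y z) + b' x (b y z) := by
  have hC3 := h.C3 x y z
  simp only [LinearMap.zero_apply, add_zero] at hC3
  linear_combination (norm := module) hC3

theorem IsCompat2.map_bracket (h : IsCompat2 0 0 b b' a a' t t') (x y : 𝔤) :
    a (b' x y) + a' (b x y) = a x ∘ₗ a' y - a' y ∘ₗ a x + a' x ∘ₗ a y - a y ∘ₗ a' x := by
  ext v
  have hC4 := h.C4 v x y
  simp only [LinearMap.zero_apply, map_zero, add_zero] at hC4
  simp only [LinearMap.add_apply, LinearMap.sub_apply, LinearMap.comp_apply]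
  linear_combination (norm := module) hC4

theorem IsCompat2.ceDiff_add_ceDiff_eq_zero (h : IsCompat2 d d' b b' a a' t t')
    (x : Fin 4 → 𝔤) :
    ceDiff (fun u v => b u v) (fun u => a u) 3 (fun v => t' (v 0) (v 1) (v 2)) x
      + ceDiff (fun u v => b' u v) (fun u => a' u) 3 (fun v => t (v 0) (v 1) (v 2)) x = 0 := by
  rw [ceDiff_three_apply _ _ (t' · · ·), ceDiff_three_apply _ _ (t · · ·)]
  linear_combination (norm := module) h.C5 (x 0) (x 1) (x 2) (x 3)

end Skeletal

/-- a skeletal 2-term compatible L∞-algebra gives a compatible Lie algebra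
`(M, b, b')`, a representation `(A, a, a')` of it, and the alternating trilinear maps
`t, t'` satisfy `∂t = 0`, `∂'t' = 0` and `∂t' + ∂'t = 0`; in particular the triple
`(t, t + t', t')` is a 3-cocycle of the compatible cochain complex. -/
theorem stmt_14 (b b' : M →ₗ[K] M →ₗ[K] M) (a a' : M →ₗ[K] A →ₗ[K] A)
    (t t' : M →ₗ[K] M →ₗ[K] M →ₗ[K] A)
    (hL : IsL2 (0 : A →ₗ[K] M) b a t) (hL' : IsL2 (0 : A →ₗ[K] M) b' a' t')
    (hC : IsCompat2 (0 : A →ₗ[K] M) (0 : A →ₗ[K] M) b b' a a' t t') :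
    IsCompatLie b b'
    ∧ (∀ x y : M, a (b x y) = a x ∘ₗ a y - a y ∘ₗ a x)
    ∧ (∀ x y : M, a' (b' x y) = a' x ∘ₗ a' y - a' y ∘ₗ a' x)
    ∧ (∀ x y : M, a (b' x y) + a' (b x y)
        = a x ∘ₗ a' y - a' y ∘ₗ a x + a' x ∘ₗ a y - a y ∘ₗ a' x)
    ∧ (∀ x : Fin 4 → M,
        ceDiff (fun u v => b u v) (fun u => a u) 3
          (fun v : Fin 3 → M => t (v 0) (v 1) (v 2)) x = 0)
    ∧ (∀ x : Fin 4 → M,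
        ceDiff (fun u v => b' u v) (fun u => a' u) 3
          (fun v : Fin 3 → M => t' (v 0) (v 1) (v 2)) x = 0)
    ∧ (∀ x : Fin 4 → M,
        ceDiff (fun u v => b u v) (fun u => a u) 3
          (fun v : Fin 3 → M => t' (v 0) (v 1) (v 2)) x
        + ceDiff (fun u v => b' u v) (fun u => a' u) 3
          (fun v : Fin 3 → M => t (v 0) (v 1) (v 2)) x = 0)
    ∧ (∀ (i : Fin 4) (x : Fin 4 → M),
        compDiff (fun u v => b u v) (fun u v => b' u v) (fun u => a u) (fun u => a' u) 3
          (fun j => if (j : ℕ) = 0 then (fun v : Fin 3 → M => t (v 0) (v 1) (v 2))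
            else if (j : ℕ) = 2 then (fun v : Fin 3 → M => t' (v 0) (v 1) (v 2))
            else (fun v : Fin 3 → M => t (v 0) (v 1) (v 2) + t' (v 0) (v 1) (v 2)))
          i x = 0) := by
  have ht := hL.ceDiff_eq_zero
  have ht' := hL'.ceDiff_eq_zero
  have htt' := hC.ceDiff_add_ceDiff_eq_zero
  exact ⟨⟨hL.b_skew, hL'.b_skew, hL.jacobi, hL'.jacobi, hC.compat⟩, hL.map_bracket,
    hL'.map_bracket, hC.map_bracket, ht, ht', htt', compDiff_eq_zero ht ht' htt'⟩
end

section
/- Let (g,[·,·],[·,·]') be a compatible Lie algebra, (V,ρ,ρ') a representation of it, and θ, θ': g³ → V alternating trilinear maps satisfying ∂θ = 0, ∂'θ' = 0 and ∂θ' + ∂'θ = 0, where ∂ and ∂' are the Chevalley–Eilenberg differentials of (g,[·,·],ρ) and (g,[·,·]',ρ') respectively. Put L₋₁ = V and L₀ = g, and define l₁ = l₁' = 0, l₂(x,y) = [x,y], l₂(x,h) = −l₂(h,x) = ρ(x)h, l₃ = θ, l₂'(x,y) = [x,y]', l₂'(x,h) = −l₂'(h,x) = ρ'(x)h, l₃'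 = θ'. Then (L₋₁ ⊕ L₀, {0, l₂, l₃}, {0, l₂', l₃'}) is a skeletal 2-term compatible L∞-algebra. -/
/-! Since `l₁ = l₁' = 0`, the conditions (L1), (L2), (C1), (C2) hold trivially and the others are
rearrangements of the hypotheses: (L3) is the Jacobi identity, (L4) says that `ρ` is a
representation and (L5) is `∂θ = 0` evaluated on four arguments; likewise (C3), (C4), (C5) are the
compatibility of the brackets, the mixed representation condition and `∂θ' + ∂'θ = 0`. -/

variable {K : Type*} [Field K] [CharZero K]
variable {A M : Type*} [AddCommGroup A] [Module K A] [AddCommGroup M] [Module K M]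

theorem leibniz_of_skew_of_jacobi {R L : Type*} [CommRing R] [AddCommGroup L] [Module R L]
    (B : L →ₗ[R] L →ₗ[R] L) (hskew : ∀ x y, B x y = -B y x)
    (hjacobi : ∀ x y z, B (B x y) z + B (B y z) x + B (B z x) y = 0) (x y z : L) :
    -B (B x y) z + B (B x z) y + B x (B y z) = 0 := by
  rw [hskew x z, hskew x (B y z), map_neg, LinearMap.neg_apply]
  linear_combination (norm := abel) -hjacobi x y z

theorem ceDiff_three_vecCons {F X W : Type*} [Field F] [AddCommGroup X] [Module F X]
    [AddCommGroup W] [Module F W] (br : X → X → X) (ρ : X → Module.End F W)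
    (θ : X → X → X → W) (w x y z : X) :
    ceDiff br ρ 3 (fun v : Fin 3 → X => θ (v 0) (v 1) (v 2)) ![w, x, y, z]
      = ρ w (θ x y z) - ρ x (θ w y z) + ρ y (θ w x z) - ρ z (θ w x y)
        - θ (br w x) y z + θ (br w y) x z - θ (br w z) x y
        - θ (br x y) w z + θ (br x z) w y - θ (br y z) w x := by
  have cons_two : ∀ (c : X) (v : Fin 2 → X), Fin.cons (α := fun _ => X) c v 2 = v 1 :=
    fun c v => Fin.cons_succ (α := fun _ => X) c v 1
  simp only [ceDiff, Fin.sum_univ_succ, Fin.sum_univ_zero]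
  norm_num [Fin.succAbove, Fin.castLT, Fin.lt_def, Fin.cons_zero, Fin.cons_succ]
  norm_num [cons_two, show Fin.castSucc (2 : Fin 3) = (2 : Fin 4) from rfl, Fin.lt_def]
  abel

section SkeletalTwoTerm

variable {R : Type*} [Field R] {V L : Type*} [AddCommGroup V] [Module R V]
  [AddCommGroup L] [Module R L]

theorem isL2_zero_of_ceDiff_eq_zero (B : L →ₗ[R] L →ₗ[R] L) (ρ : L →ₗ[R] V →ₗ[R] V)
    (θ : L →ₗ[R] L →ₗ[R] L →ₗ[R] V) (hskew : ∀ x y, B x y = -B y x)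
    (hjacobi : ∀ x y z, B (B x y) z + B (B y z) x + B (B z x) y = 0)
    (hrep : ∀ x y, ρ (B x y) = ρ x ∘ₗ ρ y - ρ y ∘ₗ ρ x)
    (hθ12 : ∀ x y z, θ x y z = -θ y x z) (hθ23 : ∀ x y z, θ x y z = -θ x z y)
    (hcocycle : ∀ x : Fin 4 → L, ceDiff (fun u v => B u v) (fun u => ρ u) 3
      (fun v : Fin 3 → L => θ (v 0) (v 1) (v 2)) x = 0) :
    IsL2 (0 : V →ₗ[R] L) B ρ θ where
  b_skew := hskew
  t_skew12 := hθ12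
  t_skew23 := hθ23
  L1 _ _ := by simp
  L2 _ _ := by simp
  L3 x y z := (leibniz_of_skew_of_jacobi B hskew hjacobi x y z).symm
  L4 h x y := by
    have e := LinearMap.congr_fun (hrep x y) h
    simp only [LinearMap.sub_apply, LinearMap.comp_apply] at e
    simp only [map_zero, LinearMap.zero_apply]
    linear_combination (norm := abel) e
  L5 w x y z := by
    have e := (ceDiff_three_vecCons _ _ (fun p q r => θ p q r) w x y z).symm.trans
      (hcocycle ![w, x, y, z])
    linear_combination (norm := abel) e

theorem isCompat2_zero_of_ceDiff_add_ceDiff_eq_zero (B B' : L →ₗ[R] L →ₗ[R] L)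
    (ρ ρ' : L →ₗ[R] V →ₗ[R] V) (θ θ' : L →ₗ[R] L →ₗ[R] L →ₗ[R] V)
    (hcompat : ∀ x y z, B (B' x y) z + B' (B x y) z
      = B (B' x z) y + B' (B x z) y + B x (B' y z) + B' x (B y z))
    (hrepmix : ∀ x y, ρ (B' x y) + ρ' (B x y)
      = ρ x ∘ₗ ρ' y - ρ' y ∘ₗ ρ x + ρ' x ∘ₗ ρ y - ρ y ∘ₗ ρ' x)
    (hcocycle : ∀ x : Fin 4 → L,
      ceDiff (fun u v => B u v) (fun u => ρ u) 3 (fun v : Fin 3 → L => θ' (v 0) (v 1) (v 2)) x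
      + ceDiff (fun u v => B' u v) (fun u => ρ' u) 3
        (fun v : Fin 3 → L => θ (v 0) (v 1) (v 2)) x = 0) :
    IsCompat2 (0 : V →ₗ[R] L) 0 B B' ρ ρ' θ θ' where
  C1 _ _ := by simp
  C2 _ _ := by simp
  C3 x y z := by
    rw [LinearMap.zero_apply, LinearMap.zero_apply, add_zero]
    linear_combination (norm := abel) hcompat x y z
  C4 h x y := by
    have e := LinearMap.congr_fun (hrepmix x y) h
    simp only [LinearMap.add_apply, LinearMap.sub_apply, LinearMap.comp_apply] at e
    simp only [LinearMap.zero_apply, map_zero, add_zero]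
    linear_combination (norm := abel) e
  C5 w x y z := by
    have e := (congrArg₂ (· + ·) (ceDiff_three_vecCons _ _ (fun p q r => θ' p q r) w x y z)
      (ceDiff_three_vecCons _ _ (fun p q r => θ p q r) w x y z)).symm.trans
      (hcocycle ![w, x, y, z])
    linear_combination (norm := abel) e

end SkeletalTwoTerm

/-- from a compatible Lie algebra `(M, b, b')`, a representation `(A, a, a')`
and alternating trilinear maps `θ, θ' : M³ → A` with `∂θ = 0`, `∂'θ' = 0` and
`∂θ' + ∂'θ = 0`, one obtains a skeletal 2-term compatible L∞-algebra
`(A ⊕ M, {0, b/a, θ}, {0, b'/a', θ'})`. -/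
theorem stmt_15 (b b' : M →ₗ[K] M →ₗ[K] M) (a a' : M →ₗ[K] A →ₗ[K] A)
    (θ θ' : M →ₗ[K] M →ₗ[K] M →ₗ[K] A)
    (hCL : IsCompatLie b b')
    (hrep : ∀ x y : M, a (b x y) = a x ∘ₗ a y - a y ∘ₗ a x)
    (hrep' : ∀ x y : M, a' (b' x y) = a' x ∘ₗ a' y - a' y ∘ₗ a' x)
    (hrepmix : ∀ x y : M, a (b' x y) + a' (b x y)
      = a x ∘ₗ a' y - a' y ∘ₗ a x + a' x ∘ₗ a y - a y ∘ₗ a' x)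
    (hθ12 : ∀ x y z : M, θ x y z = - θ y x z)
    (hθ23 : ∀ x y z : M, θ x y z = - θ x z y)
    (hθ'12 : ∀ x y z : M, θ' x y z = - θ' y x z)
    (hθ'23 : ∀ x y z : M, θ' x y z = - θ' x z y)
    (hcocy : ∀ x : Fin 4 → M,
      ceDiff (fun u v => b u v) (fun u => a u) 3
        (fun v : Fin 3 → M => θ (v 0) (v 1) (v 2)) x = 0)
    (hcocy' : ∀ x : Fin 4 → M,
      ceDiff (fun u v => b' u v) (fun u => a' u) 3
        (fun v : Fin 3 → M => θ' (v 0) (v 1) (v 2)) x = 0)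
    (hcocymix : ∀ x : Fin 4 → M,
      ceDiff (fun u v => b u v) (fun u => a u) 3
        (fun v : Fin 3 → M => θ' (v 0) (v 1) (v 2)) x
      + ceDiff (fun u v => b' u v) (fun u => a' u) 3
        (fun v : Fin 3 → M => θ (v 0) (v 1) (v 2)) x = 0) :
    IsL2 (0 : A →ₗ[K] M) b a θ ∧ IsL2 (0 : A →ₗ[K] M) b' a' θ'
      ∧ IsCompat2 (0 : A →ₗ[K] M) (0 : A →ₗ[K] M) b b' a a' θ θ' :=
  ⟨isL2_zero_of_ceDiff_eq_zero b a θ hCL.skew hCL.jacobi hrep hθ12 hθ23 hcocy,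
    isL2_zero_of_ceDiff_eq_zero b' a' θ' hCL.skew' hCL.jacobi' hrep' hθ'12 hθ'23 hcocy',
    isCompat2_zero_of_ceDiff_add_ceDiff_eq_zero b b' a a' θ θ' hCL.compat hrepmix hcocymix⟩
end
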